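/- arXiv:2112.13908 — 3 statements merged into one kernel-verified Lean document; each statement's English description precedes it below -/
import Mathlib

section
/- Let m, n ≥ 2 and let ξ ∈ ℝ^m, ζ ∈ ℝ^n. Then the generalized Vandermonde product Π_{(j,k)<(p,q)} (ξ_j + ζ_k − ξ_p − ζ_q), taken over pairs of double indices (j,k), (p,q) ∈ {1,…,m}×{1,…,n} in lexicographic order, equals Δ_m(ξ)^n · Δ_n(ζ)^m · Π_{1≤j<p≤m} Π_{1≤k<q≤n} ((ξ_j − ξ_p)² − (ζ_k − ζ_q)²), where Δ_m(ξ) = Π_{1≤i<j≤m}(ξ_i − ξ_j). -/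
open Finset

/-- For `m, n ≥ 2`, `ξ ∈ ℝ^m`, `ζ ∈ ℝ^n`, the generalized Vandermonde product over pairs
of double indices in lexicographic order satisfies
`Π_{(j,k)<(p,q)} (ξ_j + ζ_k − ξ_p − ζ_q)
  = Δ_m(ξ)^n Δ_n(ζ)^m Π_{j<p} Π_{k<q} ((ξ_j − ξ_p)² − (ζ_k − ζ_q)²)`. -/
theorem vandermonde_kronecker_sum_factorization (m n : ℕ) (hm : 2 ≤ m) (hn : 2 ≤ n)
    (ξ : Fin m → ℝ) (ζ : Fin n → ℝ) :
    (∏ P ∈ Finset.univ.filter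
        (fun P : (Fin m × Fin n) × (Fin m × Fin n) =>
          P.1.1 < P.2.1 ∨ (P.1.1 = P.2.1 ∧ P.1.2 < P.2.2)),
        (ξ P.1.1 + ζ P.1.2 - ξ P.2.1 - ζ P.2.2))
      = (∏ p ∈ Finset.univ.filter (fun p : Fin m × Fin m => p.1 < p.2),
          (ξ p.1 - ξ p.2)) ^ n *
        (∏ q ∈ Finset.univ.filter (fun q : Fin n × Fin n => q.1 < q.2),
          (ζ q.1 - ζ q.2)) ^ m *
        ∏ p ∈ Finset.univ.filter (fun p : Fin m × Fin m => p.1 < p.2),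
          ∏ q ∈ Finset.univ.filter (fun q : Fin n × Fin n => q.1 < q.2),
            ((ξ p.1 - ξ p.2) ^ 2 - (ζ q.1 - ζ q.2) ^ 2) := by
  classical
  set Sm : Finset (Fin m × Fin m) := Finset.univ.filter (fun p => p.1 < p.2) with hSm
  set Sn : Finset (Fin n × Fin n) := Finset.univ.filter (fun q => q.1 < q.2) with hSn
  set f : (Fin m × Fin n) × (Fin m × Fin n) → ℝ :=
    fun P => ξ P.1.1 + ζ P.1.2 - ξ P.2.1 - ζ P.2.2 with hf
  set A1 : Finset ((Fin m × Fin n) × (Fin m × Fin n)) :=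
    Finset.univ.filter (fun P => P.1.1 < P.2.1 ∧ P.1.2 = P.2.2) with hA1
  set A2 : Finset ((Fin m × Fin n) × (Fin m × Fin n)) :=
    Finset.univ.filter (fun P => P.1.1 < P.2.1 ∧ P.1.2 < P.2.2) with hA2
  set A3 : Finset ((Fin m × Fin n) × (Fin m × Fin n)) :=
    Finset.univ.filter (fun P => P.1.1 < P.2.1 ∧ P.2.2 < P.1.2) with hA3
  set A4 : Finset ((Fin m × Fin n) × (Fin m × Fin n)) :=
    Finset.univ.filter (fun P => P.1.1 = P.2.1 ∧ P.1.2 < P.2.2) with hA4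
  have hsplit : (Finset.univ.filter
      (fun P : (Fin m × Fin n) × (Fin m × Fin n) =>
        P.1.1 < P.2.1 ∨ (P.1.1 = P.2.1 ∧ P.1.2 < P.2.2)))
      = ((A1 ∪ A2) ∪ A3) ∪ A4 := by
    ext P
    simp only [hA1, hA2, hA3, hA4, Finset.mem_union, Finset.mem_filter, Finset.mem_univ,
      true_and]
    constructor
    · rintro (h | ⟨h1, h2⟩)
      · rcases lt_trichotomy P.1.2 P.2.2 with h' | h' | h'
        · exact Or.inl (Or.inl (Or.inr ⟨h, h'⟩))
        · exact Or.inl (Or.inl (Or.inl ⟨h, h'⟩))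
        · exact Or.inl (Or.inr ⟨h, h'⟩)
      · exact Or.inr ⟨h1, h2⟩
    · rintro ((((⟨h, _⟩ | ⟨h, _⟩) | ⟨h, _⟩) | ⟨h1, h2⟩))
      · exact Or.inl h
      · exact Or.inl h
      · exact Or.inl h
      · exact Or.inr ⟨h1, h2⟩
  have d12 : Disjoint A1 A2 := by
    simp only [Finset.disjoint_left, hA1, hA2, Finset.mem_filter]
    rintro P ⟨-, -, h⟩ ⟨-, -, h'⟩; exact absurd (h ▸ h') (lt_irrefl _)
  have d123 : Disjoint (A1 ∪ A2) A3 := by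
    simp only [Finset.disjoint_left, hA1, hA2, hA3, Finset.mem_union, Finset.mem_filter]
    rintro P (⟨-, -, h⟩ | ⟨-, -, h⟩) ⟨-, -, h'⟩
    · exact absurd (h ▸ h') (lt_irrefl _)
    · exact absurd (h.trans h') (lt_irrefl _)
  have d1234 : Disjoint ((A1 ∪ A2) ∪ A3) A4 := by
    simp only [Finset.disjoint_left, hA1, hA2, hA3, hA4, Finset.mem_union, Finset.mem_filter]
    rintro P ((⟨-, h, -⟩ | ⟨-, h, -⟩) | ⟨-, h, -⟩) ⟨-, h', -⟩ <;>
      exact absurd (h' ▸ h) (lt_irrefl _)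
  have h1 : ∏ P ∈ A1, f P = (∏ p ∈ Sm, (ξ p.1 - ξ p.2)) ^ n := by
    have := Finset.prod_bij'
      (i := fun (P : (Fin m × Fin n) × (Fin m × Fin n)) (_ : P ∈ A1) =>
        ((P.1.1, P.2.1), P.1.2))
      (j := fun (x : (Fin m × Fin m) × Fin n) (_ : x ∈ Sm ×ˢ Finset.univ) =>
        ((x.1.1, x.2), (x.1.2, x.2)))
      (s := A1) (t := Sm ×ˢ Finset.univ) (f := f)
      (g := fun x => ξ x.1.1 - ξ x.1.2)
      (hi := by
        intro a ha
        simp only [hA1, Finset.mem_filter] at ha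
        simp only [hSm, Finset.mem_product, Finset.mem_filter, Finset.mem_univ, true_and]
        exact ⟨ha.2.1, trivial⟩)
      (hj := fun a ha => Finset.mem_filter.2 ⟨Finset.mem_univ _,
        (Finset.mem_filter.1 (Finset.mem_product.1 ha).1).2, rfl⟩)
      (left_inv := by
        intro a ha
        simp only [hA1, Finset.mem_filter] at ha
        obtain ⟨-, -, h⟩ := ha
        ext <;> simp [h])
      (right_inv := by intro a ha; rfl)
      (h := by
        intro a ha
        simp only [hA1, Finset.mem_filter] at ha
        simp only [hf, ha.2.2]; ring)
    rw [this, Finset.prod_product]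
    simp [Finset.prod_const, Finset.card_univ, Finset.prod_pow]
  have h4 : ∏ P ∈ A4, f P = (∏ q ∈ Sn, (ζ q.1 - ζ q.2)) ^ m := by
    have := Finset.prod_bij'
      (i := fun (P : (Fin m × Fin n) × (Fin m × Fin n)) (_ : P ∈ A4) =>
        ((P.1.2, P.2.2), P.1.1))
      (j := fun (x : (Fin n × Fin n) × Fin m) (_ : x ∈ Sn ×ˢ Finset.univ) =>
        ((x.2, x.1.1), (x.2, x.1.2)))
      (s := A4) (t := Sn ×ˢ Finset.univ) (f := f)
      (g := fun x => ζ x.1.1 - ζ x.1.2)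
      (hi := by
        intro a ha
        simp only [hA4, Finset.mem_filter] at ha
        simp only [hSn, Finset.mem_product, Finset.mem_filter, Finset.mem_univ, true_and]
        exact ⟨ha.2.2, trivial⟩)
      (hj := fun a ha => Finset.mem_filter.2 ⟨Finset.mem_univ _, rfl,
        (Finset.mem_filter.1 (Finset.mem_product.1 ha).1).2⟩)
      (left_inv := by
        intro a ha
        simp only [hA4, Finset.mem_filter] at ha
        obtain ⟨-, h, -⟩ := ha
        ext <;> simp [h])
      (right_inv := by intro a ha; rfl)
      (h := by
        intro a ha
        simp only [hA4, Finset.mem_filter] at ha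
        simp only [hf, ha.2.1]; ring)
    rw [this, Finset.prod_product]
    simp [Finset.prod_const, Finset.card_univ, Finset.prod_pow]
  have h2 : ∏ P ∈ A2, f P
      = ∏ x ∈ Sm ×ˢ Sn, (ξ x.1.1 + ζ x.2.1 - ξ x.1.2 - ζ x.2.2) := by
    refine Finset.prod_bij'
      (fun (P : (Fin m × Fin n) × (Fin m × Fin n)) (_ : P ∈ A2) =>
        ((P.1.1, P.2.1), (P.1.2, P.2.2)))
      (fun (x : (Fin m × Fin m) × (Fin n × Fin n)) (_ : x ∈ Sm ×ˢ Sn) =>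
        ((x.1.1, x.2.1), (x.1.2, x.2.2))) ?_ ?_ ?_ ?_ ?_
    · intro a ha
      simp only [hA2, Finset.mem_filter] at ha
      simp only [hSm, hSn, Finset.mem_product, Finset.mem_filter, Finset.mem_univ, true_and]
      exact ⟨ha.2.1, ha.2.2⟩
    · intro a ha
      simp only [hSm, hSn, Finset.mem_product, Finset.mem_filter, Finset.mem_univ, true_and] at ha
      simp only [hA2, Finset.mem_filter, Finset.mem_univ, true_and]
      exact ⟨ha.1, ha.2⟩
    · intro a ha; rfl
    · intro a ha; rfl
    · intro a ha; rfl
  have h3 : ∏ P ∈ A3, f P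
      = ∏ x ∈ Sm ×ˢ Sn, (ξ x.1.1 + ζ x.2.2 - ξ x.1.2 - ζ x.2.1) := by
    refine Finset.prod_bij'
      (fun (P : (Fin m × Fin n) × (Fin m × Fin n)) (_ : P ∈ A3) =>
        ((P.1.1, P.2.1), (P.2.2, P.1.2)))
      (fun (x : (Fin m × Fin m) × (Fin n × Fin n)) (_ : x ∈ Sm ×ˢ Sn) =>
        ((x.1.1, x.2.2), (x.1.2, x.2.1))) ?_ ?_ ?_ ?_ ?_
    · intro a ha
      simp only [hA3, Finset.mem_filter] at ha
      simp only [hSm, hSn, Finset.mem_product, Finset.mem_filter, Finset.mem_univ, true_and]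
      exact ⟨ha.2.1, ha.2.2⟩
    · intro a ha
      simp only [hSm, hSn, Finset.mem_product, Finset.mem_filter, Finset.mem_univ, true_and] at ha
      simp only [hA3, Finset.mem_filter, Finset.mem_univ, true_and]
      exact ⟨ha.1, ha.2⟩
    · intro a ha; rfl
    · intro a ha; rfl
    · intro a ha; rfl
  have h23 : (∏ P ∈ A2, f P) * (∏ P ∈ A3, f P)
      = ∏ p ∈ Sm, ∏ q ∈ Sn, ((ξ p.1 - ξ p.2) ^ 2 - (ζ q.1 - ζ q.2) ^ 2) := by
    have hpp := Finset.prod_product' (s := Sm) (t := Sn)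
      (f := fun (p : Fin m × Fin m) (q : Fin n × Fin n) =>
        ((ξ p.1 - ξ p.2) ^ 2 - (ζ q.1 - ζ q.2) ^ 2))
    rw [h2, h3, ← Finset.prod_mul_distrib, ← hpp]
    exact Finset.prod_congr rfl fun x _ => by ring
  rw [hsplit, Finset.prod_union d1234, Finset.prod_union d123, Finset.prod_union d12,
    h1, h2, h3, h4]
  rw [← h2, ← h3]
  calc (∏ p ∈ Sm, (ξ p.1 - ξ p.2)) ^ n * (∏ P ∈ A2, f P) * (∏ P ∈ A3, f P) *
        (∏ q ∈ Sn, (ζ q.1 - ζ q.2)) ^ m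
      = (∏ p ∈ Sm, (ξ p.1 - ξ p.2)) ^ n * (∏ q ∈ Sn, (ζ q.1 - ζ q.2)) ^ m *
        ((∏ P ∈ A2, f P) * (∏ P ∈ A3, f P)) := by ring
    _ = _ := by rw [h23]
end

section
/- The orthogonal projection of an mn×mn Hermitian matrix M with Tr M = 0 (with respect to the Frobenius inner product ⟨A,B⟩ = Tr(AB)) onto the subspace {ξ ⊗ 1_n + 1_m ⊗ ζ : ξ ∈ Her(m), ζ ∈ Her(n), Tr ξ = Tr ζ = 0} is given by (1/n) π_1(M) ⊗ 1_n + (1/m) 1_m ⊗ π_2(M). -/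
open Matrix Kronecker

/-!
Pairing `N` with `ξ ⊗ 1 + 1 ⊗ ζ` gives `Tr(π₁(N) ξ) + Tr(π₂(N) ζ)`, so `M - P` is orthogonal to
the subspace once `π₁(P) = π₁(M)` and `π₂(P) = π₂(M)`. These follow from
`π₁(A ⊗ B) = Tr(B) A` and `π₂(A ⊗ B) = Tr(A) B`: the diagonal terms return `π₁(M)` and `π₂(M)`,
and the cross terms are multiples of `Tr M = 0`.
-/

namespace Matrix

variable {l m n R : Type*}

/-- The partial trace `π₁`. -/
def traceRight [AddCommMonoid R] [Fintype n] (M : Matrix (l × n) (m × n) R) : Matrix l m R :=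
  of fun i k => ∑ j, M (i, j) (k, j)

/-- The partial trace `π₂`. -/
def traceLeft [AddCommMonoid R] [Fintype l] (M : Matrix (l × m) (l × n) R) : Matrix m n R :=
  of fun j k => ∑ i, M (i, j) (i, k)

section AddCommMonoid
variable [AddCommMonoid R]

@[simp] theorem traceRight_apply [Fintype n] (M : Matrix (l × n) (m × n) R) (i k) :
    traceRight M i k = ∑ j, M (i, j) (k, j) := rfl

@[simp] theorem traceLeft_apply [Fintype l] (M : Matrix (l × m) (l × n) R) (j k) :
    traceLeft M j k = ∑ i, M (i, j) (i, k) := rfl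

theorem traceRight_add [Fintype n] (M N : Matrix (l × n) (m × n) R) :
    traceRight (M + N) = traceRight M + traceRight N := by
  ext; simp [Finset.sum_add_distrib]

theorem traceLeft_add [Fintype l] (M N : Matrix (l × m) (l × n) R) :
    traceLeft (M + N) = traceLeft M + traceLeft N := by
  ext; simp [Finset.sum_add_distrib]

theorem trace_traceRight [Fintype m] [Fintype n] (M : Matrix (m × n) (m × n) R) :
    trace (traceRight M) = trace M := by
  simp [trace, Fintype.sum_prod_type]

theorem trace_traceLeft [Fintype m] [Fintype n] (M : Matrix (m × n) (m × n) R) :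
    trace (traceLeft M) = trace M := by
  simp [trace, Fintype.sum_prod_type, Finset.sum_comm (γ := m)]

theorem IsHermitian.traceRight [StarAddMonoid R] [Fintype n] {M : Matrix (m × n) (m × n) R}
    (hM : M.IsHermitian) : (traceRight M).IsHermitian := by
  ext i k; simp [star_sum, hM.apply]

theorem IsHermitian.traceLeft [StarAddMonoid R] [Fintype m] {M : Matrix (m × n) (m × n) R}
    (hM : M.IsHermitian) : (traceLeft M).IsHermitian := by
  ext i k; simp [star_sum, hM.apply]

end AddCommMonoid

theorem traceRight_sub [AddCommGroup R] [Fintype n] (M N : Matrix (l × n) (m × n) R) :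
    traceRight (M - N) = traceRight M - traceRight N := by
  ext; simp [Finset.sum_sub_distrib]

theorem traceLeft_sub [AddCommGroup R] [Fintype l] (M N : Matrix (l × m) (l × n) R) :
    traceLeft (M - N) = traceLeft M - traceLeft N := by
  ext; simp [Finset.sum_sub_distrib]

theorem traceRight_kronecker [CommSemiring R] [Fintype n] (A : Matrix l m R) (B : Matrix n n R) :
    traceRight (A ⊗ₖ B) = trace B • A := by
  ext; simp [trace, Finset.mul_sum, mul_comm]

theorem traceLeft_kronecker [Semiring R] [Fintype l] (A : Matrix l l R) (B : Matrix m n R) :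
    traceLeft (A ⊗ₖ B) = trace A • B := by
  ext; simp [trace, Finset.sum_mul]

theorem trace_mul_kronecker_one [Semiring R] [Fintype m] [Fintype n] [DecidableEq n]
    (M : Matrix (m × n) (m × n) R) (A : Matrix m m R) :
    trace (M * (A ⊗ₖ (1 : Matrix n n R))) = trace (traceRight M * A) := by
  simp only [trace, diag_apply, mul_apply, kroneckerMap_apply, one_apply, mul_ite, mul_one,
    mul_zero, Fintype.sum_prod_type, Finset.sum_ite_eq', Finset.mem_univ, ↓reduceIte,
    traceRight_apply, Finset.sum_mul]
  exact Fintype.sum_congr _ _ fun _ => Finset.sum_comm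

theorem trace_mul_one_kronecker [Semiring R] [Fintype m] [Fintype n] [DecidableEq m]
    (M : Matrix (m × n) (m × n) R) (B : Matrix n n R) :
    trace (M * ((1 : Matrix m m R) ⊗ₖ B)) = trace (traceLeft M * B) := by
  simp only [trace, diag_apply, mul_apply, kroneckerMap_apply, one_apply, ite_mul, one_mul,
    zero_mul, mul_ite, mul_zero, Fintype.sum_prod_type, Finset.sum_ite_irrel,
    Finset.sum_const_zero, Finset.sum_ite_eq', Finset.mem_univ, ↓reduceIte, traceLeft_apply,
    Finset.sum_mul]
  rw [Finset.sum_comm]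
  exact Fintype.sum_congr _ _ fun _ => Finset.sum_comm

theorem trace_mul_kronecker_one_add_one_kronecker [Semiring R] [Fintype m] [Fintype n]
    [DecidableEq m] [DecidableEq n] (M : Matrix (m × n) (m × n) R) (A : Matrix m m R)
    (B : Matrix n n R) :
    trace (M * (A ⊗ₖ (1 : Matrix n n R) + (1 : Matrix m m R) ⊗ₖ B)) =
      trace (traceRight M * A) + trace (traceLeft M * B) := by
  rw [Matrix.mul_add, trace_add, trace_mul_kronecker_one, trace_mul_one_kronecker]

section Field
variable {K : Type*} [Field K] [Fintype m] [Fintype n] [DecidableEq m] [DecidableEq n]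

def partialTraceProjection (M : Matrix (m × n) (m × n) K) : Matrix (m × n) (m × n) K :=
  ((Fintype.card n : K)⁻¹ • traceRight M) ⊗ₖ (1 : Matrix n n K) +
    (1 : Matrix m m K) ⊗ₖ ((Fintype.card m : K)⁻¹ • traceLeft M)

theorem traceRight_partialTraceProjection {M : Matrix (m × n) (m × n) K} (htr : trace M = 0)
    (hn : (Fintype.card n : K) ≠ 0) : traceRight (partialTraceProjection M) = traceRight M := by
  rw [partialTraceProjection, traceRight_add, traceRight_kronecker, traceRight_kronecker,
    trace_smul, trace_traceLeft, htr, trace_one, smul_zero, zero_smul, add_zero, smul_smul,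
    mul_inv_cancel₀ hn, one_smul]

theorem traceLeft_partialTraceProjection {M : Matrix (m × n) (m × n) K} (htr : trace M = 0)
    (hm : (Fintype.card m : K) ≠ 0) : traceLeft (partialTraceProjection M) = traceLeft M := by
  rw [partialTraceProjection, traceLeft_add, traceLeft_kronecker, traceLeft_kronecker,
    trace_smul, trace_traceRight, htr, trace_one, smul_zero, zero_smul, zero_add, smul_smul,
    mul_inv_cancel₀ hm, one_smul]

end Field

end Matrix

/-- The orthogonal projection (w.r.t. the Frobenius inner product `⟨A,B⟩ = Tr(AB)`) of a
traceless `mn×mn` Hermitian matrix `M` onto the subspace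
`{ξ ⊗ 1_n + 1_m ⊗ ζ : ξ, ζ Hermitian traceless}` is
`P = (1/n) π₁(M) ⊗ 1_n + (1/m) 1_m ⊗ π₂(M)`: `P` lies in the subspace and `M − P` is
orthogonal to every element of the subspace. -/
theorem orthogonal_projection_partial_trace (m n : ℕ) (hm : 0 < m) (hn : 0 < n)
    (M : Matrix (Fin m × Fin n) (Fin m × Fin n) ℂ) (hM : M.IsHermitian)
    (htr : Matrix.trace M = 0)
    (P : Matrix (Fin m × Fin n) (Fin m × Fin n) ℂ)
    (hP : P = ((n : ℂ)⁻¹ • (Matrix.of fun i k : Fin m => ∑ j : Fin n, M (i, j) (k, j))) ⊗ₖ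
            (1 : Matrix (Fin n) (Fin n) ℂ) +
          (1 : Matrix (Fin m) (Fin m) ℂ) ⊗ₖ
            ((m : ℂ)⁻¹ • (Matrix.of fun j l : Fin n => ∑ i : Fin m, M (i, j) (i, l)))) :
    (∃ (ξ : Matrix (Fin m) (Fin m) ℂ) (ζ : Matrix (Fin n) (Fin n) ℂ),
        ξ.IsHermitian ∧ ζ.IsHermitian ∧ Matrix.trace ξ = 0 ∧ Matrix.trace ζ = 0 ∧
        P = ξ ⊗ₖ (1 : Matrix (Fin n) (Fin n) ℂ) + (1 : Matrix (Fin m) (Fin m) ℂ) ⊗ₖ ζ) ∧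
    (∀ (ξ : Matrix (Fin m) (Fin m) ℂ) (ζ : Matrix (Fin n) (Fin n) ℂ),
        ξ.IsHermitian → ζ.IsHermitian → Matrix.trace ξ = 0 → Matrix.trace ζ = 0 →
        Matrix.trace ((M - P) *
          (ξ ⊗ₖ (1 : Matrix (Fin n) (Fin n) ℂ) +
            (1 : Matrix (Fin m) (Fin m) ℂ) ⊗ₖ ζ)) = 0) := by
  have hP' : P = partialTraceProjection M := by
    rw [hP, partialTraceProjection, Fintype.card_fin, Fintype.card_fin]; rfl
  refine ⟨⟨(n : ℂ)⁻¹ • traceRight M, (m : ℂ)⁻¹ • traceLeft M,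
    hM.traceRight.smul (IsSelfAdjoint.natCast n).inv₀,
    hM.traceLeft.smul (IsSelfAdjoint.natCast m).inv₀,
    by rw [trace_smul, trace_traceRight, htr, smul_zero],
    by rw [trace_smul, trace_traceLeft, htr, smul_zero], hP⟩, fun ξ ζ _ _ _ _ => ?_⟩
  have hm' : (Fintype.card (Fin m) : ℂ) ≠ 0 := by simpa using hm.ne'
  have hn' : (Fintype.card (Fin n) : ℂ) ≠ 0 := by simpa using hn.ne'
  rw [trace_mul_kronecker_one_add_one_kronecker, traceRight_sub, traceLeft_sub, hP',
    traceRight_partialTraceProjection htr hn', traceLeft_partialTraceProjection htr hm',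
    sub_self, sub_self]
  simp
end

section
/- For 1 < k < n−1, the degree in the variable x_1 of the polynomial P_fer(x) = Δ_K([α·x]_{α∈𝓘}) / Δ_n(x) equals C(n−1,k)·C(n−1,k−1) − n + 1, where K = C(n,k). -/
open MvPolynomial
open scoped Classical

/-!
For `i < j` pick a `(k-1)`-set `W` avoiding `i` and `j`; then `(W ∪ {j}, W ∪ {i})` is a
lexicographically ordered pair of `k`-sets whose factor is `x_j - x_i`, and different `(i, j)`
give different pairs, so `Δ_n` divides the numerator. Over a domain `x_1`-degrees add up.
A factor `(α - β)·x` has `x_1`-degree one exactly when `α_1 ≠ β_1`, and as the first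
coordinate decides the lexicographic order, this means `α_1 = 0`, `β_1 = 1`: there are
`C(n-1,k)·C(n-1,k-1)` such factors, while `x_1` occurs in exactly `n - 1` factors of `Δ_n`.
-/

namespace Pi

lemma toLex_lt_iff_of_isBot {ι β : Type*} [LinearOrder ι] [LT β] {a : ι} (ha : IsBot a)
    {x y : ι → β} (h : x a ≠ y a) : toLex x < toLex y ↔ x a < y a := by
  constructor
  · rintro ⟨i, hbefore, hi⟩
    obtain rfl | hai := (ha i).eq_or_lt
    · exact hi
    · exact absurd (hbefore a hai) h
  · exact fun hlt => ⟨a, fun j hj => absurd (ha j) hj.not_ge, hlt⟩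

end Pi

namespace Finset

variable {σ : Type*}

def indicatorLex [DecidableEq σ] (A : Finset σ) : Lex (σ → ℕ) :=
  toLex fun i => if i ∈ A then 1 else 0

variable [LinearOrder σ] {a i j : σ} {A B W : Finset σ}

lemma indicatorLex_insert_lt_insert (hij : i < j) (hi : i ∉ W) :
    indicatorLex (insert j W) < indicatorLex (insert i W) :=
  ⟨i, fun l hl => by simp [indicatorLex, hl.ne, (hl.trans hij).ne],
    by simp [indicatorLex, hij.ne, hi]⟩

lemma indicatorLex_lt_iff_of_isBot (ha : IsBot a) (h : ¬(a ∈ A ↔ a ∈ B)) :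
    indicatorLex A < indicatorLex B ↔ a ∉ A ∧ a ∈ B := by
  rw [indicatorLex, indicatorLex, Pi.toLex_lt_iff_of_isBot ha] <;>
    by_cases hA : a ∈ A <;> by_cases hB : a ∈ B <;> simp_all

variable [Fintype σ]

variable (σ) in
noncomputable def lexPairs (k : ℕ) : Finset (Finset σ × Finset σ) :=
  univ.filter fun p => #p.1 = k ∧ #p.2 = k ∧ indicatorLex p.1 < indicatorLex p.2

lemma ne_of_mem_lexPairs {k : ℕ} {p : Finset σ × Finset σ} (hp : p ∈ lexPairs σ k) :
    p.1 ≠ p.2 := fun h => lt_irrefl (indicatorLex p.2) (h ▸ (mem_filter.1 hp).2.2.2)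

lemma insert_insert_mem_lexPairs (hij : i < j) (hi : i ∉ W) (hj : j ∉ W) :
    (insert j W, insert i W) ∈ lexPairs σ (#W + 1) := by
  simp [lexPairs, card_insert_of_notMem hi, card_insert_of_notMem hj,
    indicatorLex_insert_lt_insert hij hi]

lemma filter_lexPairs_of_isBot (ha : IsBot a) (k : ℕ) :
    (lexPairs σ k).filter (fun p => ¬(a ∈ p.1 ↔ a ∈ p.2)) =
      powersetCard k (univ.erase a) ×ˢ (powersetCard k univ).filter ({a} ⊆ ·) := by
  ext ⟨A, B⟩
  have hlex := indicatorLex_lt_iff_of_isBot ha (A := A) (B := B)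
  by_cases hA : a ∈ A <;> by_cases hB : a ∈ B <;> simp_all [lexPairs, subset_erase]

end Finset

namespace MvPolynomial

open Finset

variable {σ R : Type*}

noncomputable def sumX [CommRing R] (A : Finset σ) : MvPolynomial σ R := ∑ i ∈ A, X i

section sumX

variable [CommRing R] {v i j : σ} {A B W : Finset σ}

lemma sumX_sub_sumX_eq_sdiff [DecidableEq σ] (A B : Finset σ) :
    (sumX A - sumX B : MvPolynomial σ R) = sumX (A \ B) - sumX (B \ A) := by
  simp only [sumX]
  rw [← sum_inter_add_sum_sdiff A B, ← sum_inter_add_sum_sdiff B A, inter_comm]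
  ring

lemma sumX_insert_sub_sumX_insert [DecidableEq σ] (hi : i ∉ W) (hj : j ∉ W) :
    (sumX (insert j W) - sumX (insert i W) : MvPolynomial σ R) = X j - X i := by
  simp only [sumX, sum_insert hi, sum_insert hj]
  ring

lemma coeff_single_sumX [DecidableEq σ] (v : σ) (A : Finset σ) :
    coeff (Finsupp.single v 1) (sumX A : MvPolynomial σ R) = if v ∈ A then 1 else 0 := by
  simp [sumX, coeff_sum, coeff_X, Finsupp.single_left_inj]

lemma degreeOf_sumX_of_notMem (hv : v ∉ A) : degreeOf v (sumX A : MvPolynomial σ R) = 0 :=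
  Nat.le_zero.mp <| (degreeOf_sum_le v A _).trans <| Finset.sup_le fun i hi => by
    rw [degreeOf_X_of_ne (ne_of_mem_of_not_mem hi hv).symm]

lemma degreeOf_sumX_le_one [Nontrivial R] (v : σ) (A : Finset σ) :
    degreeOf v (sumX A : MvPolynomial σ R) ≤ 1 := by
  refine (degreeOf_sum_le v A _).trans <| Finset.sup_le fun i _ => ?_
  rw [degreeOf_X]
  split_ifs <;> simp

lemma degreeOf_sumX_sub_sumX_of_iff (h : v ∈ A ↔ v ∈ B) :
    degreeOf v (sumX A - sumX B : MvPolynomial σ R) = 0 := by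
  rw [sumX_sub_sumX_eq_sdiff]
  refine Nat.le_zero.mp <| (degreeOf_sub_le v _ _).trans ?_
  rw [degreeOf_sumX_of_notMem, degreeOf_sumX_of_notMem] <;> simp [h]

lemma degreeOf_sumX_sub_sumX_of_not_iff [Nontrivial R] (h : ¬(v ∈ A ↔ v ∈ B)) :
    degreeOf v (sumX A - sumX B : MvPolynomial σ R) = 1 := by
  refine le_antisymm ((degreeOf_sub_le v _ _).trans
    (max_le (degreeOf_sumX_le_one v A) (degreeOf_sumX_le_one v B))) ?_
  have hcoeff : coeff (Finsupp.single v 1) (sumX A - sumX B : MvPolynomial σ R) ≠ 0 := by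
    rw [coeff_sub, coeff_single_sumX, coeff_single_sumX]
    by_cases hA : v ∈ A <;> by_cases hB : v ∈ B <;> simp_all
  simpa using le_degreeOf_of_mem_support v (mem_support_iff.mpr hcoeff)

lemma sumX_sub_sumX_ne_zero [Nontrivial R] (h : A ≠ B) :
    (sumX A - sumX B : MvPolynomial σ R) ≠ 0 := by
  obtain ⟨v, hv⟩ : ∃ v, ¬(v ∈ A ↔ v ∈ B) := by
    contrapose! h
    exact Finset.ext h
  exact ne_zero_of_degreeOf_ne_zero (i := v) (by simp [degreeOf_sumX_sub_sumX_of_not_iff hv])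

end sumX

variable [LinearOrder σ] [Fintype σ] {a : σ}

variable (σ R) in
noncomputable def vandermonde [CommRing R] : MvPolynomial σ R :=
  ∏ q ∈ univ.filter (fun q : σ × σ => q.1 < q.2), (X q.1 - X q.2)

variable (σ R) in
noncomputable def fermionicNumerator [CommRing R] (k : ℕ) : MvPolynomial σ R :=
  ∏ p ∈ lexPairs σ k, (sumX p.1 - sumX p.2)

lemma fermionicNumerator_ne_zero [CommRing R] [IsDomain R] (k : ℕ) :
    fermionicNumerator σ R k ≠ 0 :=
  prod_ne_zero_iff.2 fun _ hp => sumX_sub_sumX_ne_zero (ne_of_mem_lexPairs hp)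

theorem vandermonde_dvd_fermionicNumerator [CommRing R] {k : ℕ} (hk : 0 < k)
    (hkσ : k < Fintype.card σ) : vandermonde σ R ∣ fermionicNumerator σ R k := by
  have hW : ∀ q : σ × σ, ∃ W ⊆ univ \ {q.1, q.2}, #W = k - 1 := fun q =>
    exists_subset_card_eq <| by
      have := card_le_two (a := q.1) (b := q.2)
      rw [card_sdiff_of_subset (subset_univ _), card_univ]
      omega
  choose W hWsub hWcard using hW
  have hW₁ (q : σ × σ) : q.1 ∉ W q := fun h => by simpa using hWsub q h
  have hW₂ (q : σ × σ) : q.2 ∉ W q := fun h => by simpa using hWsub q h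
  set P := univ.filter (fun q : σ × σ => q.1 < q.2)
  let f (q : σ × σ) : Finset σ × Finset σ := (insert q.2 (W q), insert q.1 (W q))
  have hf_mem : ∀ q ∈ P, f q ∈ lexPairs σ k := fun q hq => by
    simpa [hWcard, Nat.sub_add_cancel hk] using
      insert_insert_mem_lexPairs (mem_filter.1 hq).2 (hW₁ q) (hW₂ q)
  have hP_ne : ∀ q ∈ P, q.1 ≠ q.2 := fun q hq => (mem_filter.1 hq).2.ne
  have hf_inj : Set.InjOn f P := fun q hq q' hq' hqq' => by
    have h₁ : (f q).2 \ (f q).1 = (f q').2 \ (f q').1 := by rw [hqq']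
    have h₂ : (f q).1 \ (f q).2 = (f q').1 \ (f q').2 := by rw [hqq']
    simp only [f, insert_sdiff_insert' (hP_ne q hq) (hW₁ q),
      insert_sdiff_insert' (hP_ne q' hq') (hW₁ q'),
      insert_sdiff_insert' (hP_ne q hq).symm (hW₂ q),
      insert_sdiff_insert' (hP_ne q' hq').symm (hW₂ q'), singleton_inj] at h₁ h₂
    exact Prod.ext h₁ h₂
  calc vandermonde σ R = ∏ q ∈ P, (X q.1 - X q.2) := rfl
    _ ∣ ∏ q ∈ P, (sumX (f q).1 - sumX (f q).2) := prod_dvd_prod_of_dvd _ _ fun q _ => by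
      rw [sumX_insert_sub_sumX_insert (hW₁ q) (hW₂ q)]
      exact Dvd.intro (-1) (by ring)
    _ = ∏ p ∈ P.image f, (sumX p.1 - sumX p.2) := by rw [prod_image hf_inj]
    _ ∣ fermionicNumerator σ R k := prod_dvd_prod_of_subset _ _ _ (image_subset_iff.2 hf_mem)

theorem degreeOf_fermionicNumerator_of_isBot [CommRing R] [IsDomain R] (ha : IsBot a) {k : ℕ}
    (hk : 0 < k) : degreeOf a (fermionicNumerator σ R k) =
      (Fintype.card σ - 1).choose k * (Fintype.card σ - 1).choose (k - 1) := by
  have hdeg (p : Finset σ × Finset σ) : degreeOf a (sumX p.1 - sumX p.2 : MvPolynomial σ R) =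
      if ¬(a ∈ p.1 ↔ a ∈ p.2) then 1 else 0 := by
    by_cases h : a ∈ p.1 ↔ a ∈ p.2
    · simp [h, degreeOf_sumX_sub_sumX_of_iff h]
    · simp [h, degreeOf_sumX_sub_sumX_of_not_iff h]
  rw [fermionicNumerator,
    degreeOf_prod_eq _ _ fun p hp => sumX_sub_sumX_ne_zero (ne_of_mem_lexPairs hp),
    sum_congr rfl fun p _ => hdeg p, ← card_filter, filter_lexPairs_of_isBot ha, card_product,
    card_powersetCard, card_filter_powersetCard_subset _ _ _ (subset_univ _) (by simpa)]
  simp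

theorem degreeOf_vandermonde_of_isBot [CommRing R] [IsDomain R] (ha : IsBot a) :
    degreeOf a (vandermonde σ R) = Fintype.card σ - 1 := by
  set P := univ.filter (fun q : σ × σ => q.1 < q.2)
  have hdeg : ∀ q ∈ P,
      degreeOf a (X q.1 - X q.2 : MvPolynomial σ R) = if q.1 = a then 1 else 0 := by
    intro q hq
    have hlt : q.1 < q.2 := (mem_filter.1 hq).2
    have hX : (X q.1 - X q.2 : MvPolynomial σ R) = sumX {q.1} - sumX {q.2} := by simp [sumX]
    rw [hX]
    split_ifs with h
    · subst h
      exact degreeOf_sumX_sub_sumX_of_not_iff (by simp [hlt.ne])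
    · exact degreeOf_sumX_sub_sumX_of_iff (by simp [Ne.symm h, ((ha _).trans_lt hlt).ne])
  have hP : P.filter (·.1 = a) = {a} ×ˢ univ.erase a := by
    ext ⟨i, j⟩
    simp only [P, mem_filter, mem_univ, true_and, mem_product, mem_singleton, mem_erase, and_true]
    constructor
    · rintro ⟨hij, rfl⟩
      exact ⟨rfl, hij.ne'⟩
    · rintro ⟨rfl, hj⟩
      exact ⟨(ha j).lt_of_ne hj.symm, rfl⟩
  rw [vandermonde,
    degreeOf_prod_eq _ _ fun q hq => sub_ne_zero.2 (X_injective.ne (mem_filter.1 hq).2.ne),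
    sum_congr rfl hdeg, ← card_filter, hP, card_product, card_singleton,
    card_erase_of_mem (mem_univ a), card_univ, one_mul]

end MvPolynomial

/-- For `1 < k < n−1`, the fermionic polynomial
`P_fer(x) = Δ_K([α·x]_{α∈𝓘}) / Δ_n(x)` (where `𝓘` is the set of 0-1 multi-indices with
exactly `k` ones, ordered lexicographically, and `K = C(n,k)`) is a polynomial — i.e.
`Δ_n` divides the numerator — and its degree in `x_1` equals
`C(n−1,k)·C(n−1,k−1) − n + 1`. Subsets of `Fin n` of cardinality `k` encode the
multi-indices via their indicator vectors. -/
theorem fermionic_polynomial_degree (n k : ℕ) (hn : 0 < n) (hk : 1 < k) (hkn : k < n - 1) :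
    ∃ Q : MvPolynomial (Fin n) ℚ,
      (∏ p ∈ Finset.univ.filter
          (fun p : Finset (Fin n) × Finset (Fin n) =>
            p.1.card = k ∧ p.2.card = k ∧
              toLex (fun i => if i ∈ p.1 then (1 : ℕ) else 0) <
                toLex (fun i => if i ∈ p.2 then (1 : ℕ) else 0)),
          ((∑ i ∈ p.1, (X i : MvPolynomial (Fin n) ℚ)) - ∑ i ∈ p.2, X i))
        = (∏ q ∈ Finset.univ.filter (fun q : Fin n × Fin n => q.1 < q.2),
            ((X q.1 : MvPolynomial (Fin n) ℚ) - X q.2)) * Q ∧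
      (Q.degreeOf (⟨0, hn⟩ : Fin n) : ℤ) =
        (Nat.choose (n - 1) k : ℤ) * (Nat.choose (n - 1) (k - 1)) - n + 1 := by
  have ha : IsBot (⟨0, hn⟩ : Fin n) := fun i => Nat.zero_le i
  obtain ⟨Q, hQ⟩ := vandermonde_dvd_fermionicNumerator (σ := Fin n) (R := ℚ) (k := k)
    (by omega) (by simp; omega)
  refine ⟨Q, hQ, ?_⟩
  have hne : vandermonde (Fin n) ℚ * Q ≠ 0 := hQ ▸ fermionicNumerator_ne_zero k
  have hdeg := degreeOf_fermionicNumerator_of_isBot (R := ℚ) ha (k := k) (by omega)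
  rw [hQ, degreeOf_mul_eq (left_ne_zero_of_mul hne) (right_ne_zero_of_mul hne),
    degreeOf_vandermonde_of_isBot ha, Fintype.card_fin] at hdeg
  zify [Nat.one_le_iff_ne_zero.2 hn.ne'] at hdeg
  linarith
end
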